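/- Under the complementarity hypothesis of the previous statement, if moreover ρ_1 < 1, then the asymptotic hitting time of the constructed mixed strategy EA(s1,s2) satisfies 1/(1 − ρ_q) < 1/(1 − ρ_1), i.e., it is strictly shorter than that of the pure strategy EA(s1). -/

import Mathlib

theorem Finset.sup'_ite_eq_sup'_lt {ι α : Type*} [LinearOrder α] {s : Finset ι}
    (hs : s.Nonempty) (f g : ι → α) (hg : ∀ x ∈ s, f x = s.sup' hs f → g x < s.sup' hs f) :
    s.sup' hs (fun x => if f x = s.sup' hs f then g x else f x) < s.sup' hs f := by
  rw [Finset.sup'_lt_iff]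
  intro x hx
  split_ifs with hmax
  · exact hg x hx hmax
  · exact (Finset.le_sup' f hx).lt_of_ne hmax

theorem stmt7_general {S : Type*} [Fintype S] [Nonempty S]
    (P1 P2 : S → ℝ)
    (ρ1 : ℝ) (hρ1 : ρ1 = Finset.univ.sup' Finset.univ_nonempty P1)
    (hρ1lt : ρ1 < 1)
    (hcomp : ∀ x, P1 x = ρ1 → P2 x < ρ1) :
    1 / (1 - Finset.univ.sup' Finset.univ_nonempty
        (fun x => if P1 x = ρ1 then P2 x else P1 x)) < 1 / (1 - ρ1) := by
  subst hρ1
  have hρq_lt := Finset.sup'_ite_eq_sup'_lt Finset.univ_nonempty P1 P2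
    fun x _ => hcomp x
  exact one_div_lt_one_div_of_lt (sub_pos.2 hρ1lt) (sub_lt_sub_left hρq_lt 1)

/-- Under the complementarity hypothesis, if `ρ₁ < 1`, the asymptotic hitting time
of the constructed mixed strategy EA is strictly shorter: `1/(1-ρ_q) < 1/(1-ρ₁)`. -/
theorem stmt7 {S : Type*} [Fintype S] [Nonempty S]
    (P1 P2 : S → ℝ)
    (h01 : ∀ x, 0 ≤ P1 x) (h11 : ∀ x, P1 x ≤ 1)
    (h02 : ∀ x, 0 ≤ P2 x) (h12 : ∀ x, P2 x ≤ 1)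
    (ρ1 : ℝ) (hρ1 : ρ1 = Finset.univ.sup' Finset.univ_nonempty P1)
    (hρ1pos : 0 < ρ1) (hρ1lt : ρ1 < 1)
    (hcomp : ∀ x, P1 x = ρ1 → P2 x < ρ1) :
    1 / (1 - Finset.univ.sup' Finset.univ_nonempty
        (fun x => if P1 x = ρ1 then P2 x else P1 x)) < 1 / (1 - ρ1) :=
  stmt7_general P1 P2 ρ1 hρ1 hρ1lt hcomp
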